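/- Let G be a strongly connected digraph and let x, y be chip-distributions on G with x ∼ y (linearly equivalent). Then dist(x) = dist(y). -/

import Mathlib

open Finset

variable {V : Type} [Fintype V] [DecidableEq V]

/-- The outdegree of a vertex `v` in the multidigraph with multiplicity function `m`
(`m u v` is the number of directed edges from `u` to `v`). -/
def outdeg (m : V → V → ℕ) (v : V) : ℤ := ∑ u, (m v u : ℤ)

/-- The indegree of a vertex. -/
def indeg (m : V → V → ℕ) (v : V) : ℤ := ∑ u, (m u v : ℤ)

/-- The digraph is loopless. -/
def Loopless (m : V → V → ℕ) : Prop := ∀ v, m v v = 0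

/-- The digraph is strongly connected: every vertex reaches every vertex on a directed path. -/
def StronglyConnected (m : V → V → ℕ) : Prop :=
  ∀ u v : V, Relation.ReflTransGen (fun a b => 0 < m a b) u v

/-- Firing vertex `v` in chip-distribution `x`: `v` sends a chip along each outgoing edge. -/
def fire (m : V → V → ℕ) (x : V → ℤ) (v : V) : V → ℤ :=
  fun u => x u + (m v u : ℤ) - (if u = v then outdeg m v else 0)

/-- The degree (total number of chips) of a chip-distribution / divisor. -/
def degSum (x : V → ℤ) : ℤ := ∑ v, x v

/-- The state of the chip-firing game after `n` steps, starting from `x` and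
firing the vertices `s 0, s 1, …` in this order. -/
def gameState (m : V → V → ℕ) (x : V → ℤ) (s : ℕ → V) : ℕ → (V → ℤ)
  | 0 => x
  | n + 1 => fire m (gameState m x s n) (s n)

/-- `s` encodes an infinite legal chip-firing game starting from `x`:
at each step the fired vertex is active. -/
def InfGame (m : V → V → ℕ) (x : V → ℤ) (s : ℕ → V) : Prop :=
  ∀ n, outdeg m (s n) ≤ gameState m x s n (s n)

/-- A chip-distribution is terminating if no infinite legal game starts from it. -/
def Terminating (m : V → V → ℕ) (x : V → ℤ) : Prop :=
  ¬ ∃ s : ℕ → V, InfGame m x s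

/-- The Laplacian of the digraph applied to `z`. -/
def lap (m : V → V → ℕ) (z : V → ℤ) : V → ℤ :=
  fun u => (∑ v, (m v u : ℤ) * z v) - outdeg m u * z u

/-- Linear equivalence: `x ∼ y` iff `x = y + L z` for some integer vector `z`. -/
def LinEquiv (m : V → V → ℕ) (x y : V → ℤ) : Prop :=
  ∃ z : V → ℤ, x = y + lap m z

/-- The distance of `x` from the non-terminating distributions:
the minimum degree of a nonnegative `y` such that `x + y` is non-terminating. -/
noncomputable def chipDist (m : V → V → ℕ) (x : V → ℤ) : ℕ :=
  sInf {n : ℕ | ∃ y : V → ℤ, 0 ≤ y ∧ degSum y = (n : ℤ) ∧ ¬ Terminating m (x + y)}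

/-!
Firing `v` adds `L·1_v`, so after a game with firing vector `f` the state is `x + L f`. An
infinite legal game stays in a finite set of states, and on a strongly connected digraph every
vertex fires infinitely often; hence some state recurs with every vertex fired in between, which
gives `p ≥ 1` with `L p = 0`. Deleting the first firing of `v` from an infinite game from `x`
leaves an infinite game from `x + L·1_v`, so the non-terminating distributions are closed under
adding `L z` for `z ≥ 0`; adding a multiple of `p` makes any `z` nonnegative without changing
`L z`. Hence, if `x ∼ y`, then `x + w` and `y + w` are non-terminating together for every `w`.
-/

section Laplacian

omit [DecidableEq V]

lemma lap_add (m : V → V → ℕ) (a b : V → ℤ) : lap m (a + b) = lap m a + lap m b := by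
  funext u
  simp only [lap, Pi.add_apply, mul_add, Finset.sum_add_distrib]
  ring

def lapHom (m : V → V → ℕ) : (V → ℤ) →+ (V → ℤ) :=
  AddMonoidHom.mk' (lap m) (lap_add m)

@[simp]
lemma lapHom_apply (m : V → V → ℕ) (z : V → ℤ) : lapHom m z = lap m z := rfl

lemma lap_zero (m : V → V → ℕ) : lap m 0 = 0 :=
  map_zero (lapHom m)

lemma le_lap_apply_of_nonneg (m : V → V → ℕ) {z : V → ℤ} (hz : 0 ≤ z) (a b : V) :
    m a b * z a - outdeg m b * z b ≤ lap m z b := by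
  have := Finset.single_le_sum (f := fun u => (m u b : ℤ) * z u)
    (fun u _ => mul_nonneg (Nat.cast_nonneg _) (hz u)) (Finset.mem_univ a)
  exact sub_le_sub_right this _

lemma degSum_add (a b : V → ℤ) : degSum (a + b) = degSum a + degSum b :=
  Finset.sum_add_distrib

lemma degSum_lap (m : V → V → ℕ) (z : V → ℤ) : degSum (lap m z) = 0 := by
  simp only [degSum, lap, outdeg, Finset.sum_sub_distrib, Finset.sum_mul]
  rw [Finset.sum_comm, sub_self]

lemma LinEquiv.add_right {m : V → V → ℕ} {x y : V → ℤ} (h : LinEquiv m x y)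
    (w : V → ℤ) : LinEquiv m (x + w) (y + w) := by
  obtain ⟨z, rfl⟩ := h
  exact ⟨z, add_right_comm _ _ _⟩

end Laplacian

lemma fire_eq_add_lap_single (m : V → V → ℕ) (x : V → ℤ) (v : V) :
    fire m x v = x + lap m (Pi.single v 1) := by
  funext u
  by_cases huv : u = v
  · subst huv
    simp [fire, lap, Pi.single_apply, add_sub_assoc]
  · simp [fire, lap, Pi.single_apply, huv]

lemma le_fire_of_ne (m : V → V → ℕ) (x : V → ℤ) {u v : V} (huv : u ≠ v) :
    x u ≤ fire m x v u := by
  simp [fire, huv]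

lemma fire_comm (m : V → V → ℕ) (x : V → ℤ) (a b : V) :
    fire m (fire m x a) b = fire m (fire m x b) a := by
  simp only [fire_eq_add_lap_single, add_right_comm]

section FiringVector

omit [Fintype V]

def firingVector (s : ℕ → V) (n : ℕ) (v : V) : ℤ := Nat.count (fun k => s k = v) n

lemma firingVector_zero (s : ℕ → V) : firingVector s 0 = 0 := by
  funext v
  simp [firingVector]

lemma firingVector_succ (s : ℕ → V) (n : ℕ) :
    firingVector s (n + 1) = firingVector s n + Pi.single (s n) 1 := by
  funext v
  by_cases hv : s n = v
  · subst hv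
    simp [firingVector, Nat.count_succ]
  · simp [firingVector, Nat.count_succ, hv, Ne.symm hv]

end FiringVector

lemma gameState_eq_add_lap (m : V → V → ℕ) (x : V → ℤ) (s : ℕ → V) (n : ℕ) :
    gameState m x s n = x + lap m (firingVector s n) := by
  induction n with
  | zero => rw [gameState, firingVector_zero, lap_zero, add_zero]
  | succ n ih =>
    rw [gameState, ih, fire_eq_add_lap_single, firingVector_succ, lap_add, add_assoc]

lemma degSum_gameState (m : V → V → ℕ) (x : V → ℤ) (s : ℕ → V) (n : ℕ) :
    degSum (gameState m x s n) = degSum x := by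
  rw [gameState_eq_add_lap, degSum_add, degSum_lap, add_zero]

namespace InfGame

variable {m : V → V → ℕ} {x : V → ℤ} {s : ℕ → V}

lemma min_le_gameState (h : InfGame m x s) (n : ℕ) (v : V) :
    min (x v) 0 ≤ gameState m x s n v := by
  induction n with
  | zero => exact min_le_left _ _
  | succ n ih =>
    rw [gameState]
    by_cases hv : v = s n
    · subst hv
      have hlegal := h n
      have hmin := min_le_right (x (s n)) 0
      simp only [fire, if_true]
      omega
    · exact ih.trans (le_fire_of_ne m _ hv)

lemma gameState_mem_Icc (h : InfGame m x s) (n : ℕ) :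
    gameState m x s n ∈
      Set.Icc (fun _ => ∑ u, min (x u) 0) (fun _ => degSum x - ∑ u, min (x u) 0) := by
  refine ⟨fun v => ?_, fun v => ?_⟩
  · have := Finset.single_le_sum (f := fun u => -min (x u) 0)
      (fun u _ => neg_nonneg.2 (min_le_right _ _)) (Finset.mem_univ v)
    rw [Finset.sum_neg_distrib] at this
    linarith [h.min_le_gameState n v]
  · have := Finset.single_le_sum (f := fun u => gameState m x s n u - min (x u) 0)
      (fun u _ => sub_nonneg.2 (h.min_le_gameState n u)) (Finset.mem_univ v)
    rw [Finset.sum_sub_distrib, ← degSum, degSum_gameState] at this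
    linarith [min_le_right (x v) 0]

-- Otherwise `b` would eventually only receive chips, and unboundedly many of them from `a`.
lemma infinite_firings_of_edge (h : InfGame m x s) {a b : V} (ha : {k | s k = a}.Infinite)
    (hab : 0 < m a b) : {k | s k = b}.Infinite := by
  intro hb
  set C : ℤ := ((hb.toFinset.card : ℕ) : ℤ)
  set K : ℕ := (degSum x - ∑ u, min (x u) 0 - x b + outdeg m b * C + 1).toNat
  set n := Nat.nth (fun k => s k = a) K
  have hFa : firingVector s n a = K := by
    simp [firingVector, n, Nat.count_nth_of_infinite ha]
  have hFb : firingVector s n b ≤ C := by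
    simp only [firingVector, C]
    exact_mod_cast Nat.count_le_card hb n
  have hF : 0 ≤ firingVector s n := fun v => Nat.cast_nonneg _
  have hrecv := le_lap_apply_of_nonneg m hF a b
  have hbound := (h.gameState_mem_Icc n).2 b
  rw [gameState_eq_add_lap] at hbound
  have hout : 0 ≤ outdeg m b := Finset.sum_nonneg fun u _ => Nat.cast_nonneg _
  have hab' : (1 : ℤ) ≤ m a b := by exact_mod_cast hab
  have hK := Int.self_le_toNat (degSum x - ∑ u, min (x u) 0 - x b + outdeg m b * C + 1)
  simp only [Pi.add_apply] at hbound
  nlinarith [mul_le_mul_of_nonneg_left hFb hout]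

lemma infinite_firings (h : InfGame m x s) (hconn : StronglyConnected m) (v : V) :
    {k | s k = v}.Infinite := by
  obtain ⟨a, ha⟩ := Finite.exists_infinite_fiber s
  induction hconn a v with
  | refl => exact Set.infinite_coe_iff.mp ha
  | tail _ hbc ih => exact h.infinite_firings_of_edge ih hbc

lemma exists_pos_lap_eq_zero (h : InfGame m x s) (hconn : StronglyConnected m) :
    ∃ p : V → ℤ, (∀ v, 1 ≤ p v) ∧ lap m p = 0 := by
  let B := Set.Icc (fun _ : V => ∑ u, min (x u) 0) (fun _ => degSum x - ∑ u, min (x u) 0)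
  have : Finite B := (Set.finite_Icc _ _).to_subtype
  obtain ⟨σ, hσ⟩ := Finite.exists_infinite_fiber
    fun n => (⟨gameState m x s n, h.gameState_mem_Icc n⟩ : B)
  have hT := Set.infinite_coe_iff.mp hσ
  obtain ⟨n₁, hn₁⟩ := hT.nonempty
  choose j hj hj_gt using fun v => (h.infinite_firings hconn v).exists_gt n₁
  obtain ⟨n₂, hn₂, hn₂_gt⟩ := hT.exists_gt (Finset.univ.sup j)
  have hsame : gameState m x s n₁ = gameState m x s n₂ :=
    congrArg Subtype.val (hn₁.trans hn₂.symm)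
  refine ⟨firingVector s n₂ - firingVector s n₁, fun v => ?_, ?_⟩
  · have h₁ := Nat.count_monotone (fun k => s k = v) (hj_gt v).le
    have h₂ := Nat.count_strict_mono (p := fun k => s k = v) (hj v)
      ((Finset.le_sup (Finset.mem_univ v)).trans_lt hn₂_gt)
    simp only [Pi.sub_apply, firingVector]
    omega
  · rw [gameState_eq_add_lap, gameState_eq_add_lap] at hsame
    rw [← lapHom_apply, map_sub, lapHom_apply, lapHom_apply, add_left_cancel hsame, sub_self]

lemma skip_first_firing (h : InfGame m x s) {j : ℕ} {v : V} (hj : s j = v)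
    (hfirst : ∀ n < j, s n ≠ v) :
    InfGame m (fire m x v) (fun n => if n < j then s n else s (n + 1)) := by
  set s' := fun n => if n < j then s n else s (n + 1)
  have hs'_lt {n : ℕ} (hn : n < j) : s' n = s n := if_pos hn
  have hs'_ge (k : ℕ) : s' (j + k) = s (j + k + 1) := if_neg (by omega)
  have hbefore : ∀ n ≤ j, gameState m (fire m x v) s' n = fire m (gameState m x s n) v := by
    intro n hn
    induction n with
    | zero => rfl
    | succ n ih => simp only [gameState, ih (by omega), hs'_lt (by omega : n < j), fire_comm]
  have hafter (k : ℕ) : gameState m (fire m x v) s' (j + k) = gameState m x s (j + k + 1) := by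
    induction k with
    | zero => simp only [add_zero, hbefore j le_rfl, gameState, hj]
    | succ k ih =>
      show fire m (gameState m (fire m x v) s' (j + k)) (s' (j + k)) =
        fire m (gameState m x s (j + k + 1)) (s (j + k + 1))
      rw [ih, hs'_ge]
  intro n
  rcases lt_or_ge n j with hn | hn
  · rw [hbefore n hn.le, hs'_lt hn]
    exact (h n).trans (le_fire_of_ne m _ (hfirst n hn))
  · obtain ⟨k, rfl⟩ := Nat.exists_eq_add_of_le hn
    rw [hafter k, hs'_ge]
    exact h _

end InfGame

variable {m : V → V → ℕ}

lemma not_terminating_fire (hconn : StronglyConnected m) {x : V → ℤ}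
    (hx : ¬ Terminating m x) (v : V) : ¬ Terminating m (fire m x v) := by
  rw [Terminating, not_not] at hx ⊢
  obtain ⟨s, hs⟩ := hx
  have hfires : ∃ j, s j = v := (hs.infinite_firings hconn v).nonempty
  exact ⟨_, hs.skip_first_firing (Nat.find_spec hfires) fun n hn => Nat.find_min hfires hn⟩

def nonTerminatingShifts (m : V → V → ℕ) : AddSubmonoid (V → ℤ) where
  carrier := {w | ∀ x, ¬ Terminating m x → ¬ Terminating m (x + lap m w)}
  zero_mem' := fun x hx => by rwa [lap_zero, add_zero]
  add_mem' := fun ha hb x hx => by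
    rw [lap_add, ← add_assoc]
    exact hb _ (ha x hx)

lemma mem_nonTerminatingShifts_of_nonneg (hconn : StronglyConnected m) {z : V → ℤ}
    (hz : 0 ≤ z) : z ∈ nonTerminatingShifts m := by
  have hsingle (v : V) : Pi.single v 1 ∈ nonTerminatingShifts m := fun x hx =>
    fire_eq_add_lap_single m x v ▸ not_terminating_fire hconn hx v
  have hz_sum : z = ∑ v, (z v).toNat • Pi.single v 1 := by
    funext u
    simpa [Finset.sum_apply, Pi.single_apply] using hz u
  rw [hz_sum]
  exact AddSubmonoid.sum_mem _ fun v _ => AddSubmonoid.nsmul_mem _ (hsingle v) _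

lemma not_terminating_add_lap (hconn : StronglyConnected m) {x : V → ℤ}
    (hx : ¬ Terminating m x) (z : V → ℤ) : ¬ Terminating m (x + lap m z) := by
  obtain ⟨s, hs⟩ := not_not.1 hx
  obtain ⟨p, hp_pos, hp_lap⟩ := hs.exists_pos_lap_eq_zero hconn
  set M := ∑ v, |z v|
  have hshift : 0 ≤ z + M • p := fun v => by
    have hM : |z v| ≤ M := Finset.single_le_sum (f := fun v => |z v|)
      (fun v _ => abs_nonneg _) (Finset.mem_univ v)
    simp only [Pi.add_apply, Pi.smul_apply, smul_eq_mul, Pi.zero_apply]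
    nlinarith [hp_pos v, abs_nonneg (z v), neg_abs_le (z v)]
  have hlap : lap m (z + M • p) = lap m z := by
    rw [← lapHom_apply, map_add, map_zsmul, lapHom_apply, lapHom_apply, hp_lap, smul_zero,
      add_zero]
  exact hlap ▸ mem_nonTerminatingShifts_of_nonneg hconn hshift x hx

lemma LinEquiv.not_terminating_iff (hconn : StronglyConnected m) {x y : V → ℤ}
    (h : LinEquiv m x y) : ¬ Terminating m x ↔ ¬ Terminating m y := by
  obtain ⟨z, rfl⟩ := h
  refine ⟨fun hx => ?_, fun hy => not_terminating_add_lap hconn hy z⟩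
  simpa [add_assoc, ← lapHom_apply] using not_terminating_add_lap hconn hx (-z)

theorem chipDist_eq_of_linEquiv_general
    {V : Type} [Fintype V] [DecidableEq V]
    (m : V → V → ℕ) (hconn : StronglyConnected m)
    (x y : V → ℤ) (hxy : LinEquiv m x y) :
    chipDist m x = chipDist m y := by
  have key (w : V → ℤ) : ¬ Terminating m (x + w) ↔ ¬ Terminating m (y + w) :=
    (hxy.add_right w).not_terminating_iff hconn
  simp only [chipDist, key]

/-- Linearly equivalent chip-distributions on a strongly connected digraph have equal
distance from the non-terminating distributions. -/
theorem chipDist_eq_of_linEquiv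
    {V : Type} [Fintype V] [DecidableEq V] [Nonempty V]
    (m : V → V → ℕ) (hloop : Loopless m) (hconn : StronglyConnected m)
    (x y : V → ℤ) (hxy : LinEquiv m x y) :
    chipDist m x = chipDist m y :=
  chipDist_eq_of_linEquiv_general m hconn x y hxy
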